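/- Let J be the set of monic polynomials of degree n over F_q whose i-th coefficient equals a prescribed value α_i for each i in a set I ⊆ {0,...,n−1}, and let S_J(ξ) = ∑_{f∈J} e(fξ). Then ∫_T |S_J(ξ)| dξ = 1, where the integral is with respect to the normalized Haar measure on T. -/

import Mathlib

/-!
Write `F = range n \ I` for the free coefficients. Reading off these coefficients identifies `J`
with `F → 𝔽_q`, and the exponent `∑ᵢ fᵢ φᵢ` is additive in `f`, so `S_J(φ)` factors as a unimodular
constant times `∏_{i ∈ F} ∑_{x ∈ 𝔽_q} e(x φᵢ)`. Since the trace maps onto `𝔽_p`, `e` is a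
nontrivial character, so each factor is `q` or `0` according as `φᵢ = 0` or not; hence
`|S_J| = q^{#F}` times the indicator of the cylinder `{φ | φᵢ = 0 for i ∈ F}`.
That cylinder is the kernel of the restriction map to `F → 𝔽_q`, a subgroup of index `q^{#F}`,
so by translation invariance its Haar measure is `q^{-#F}`.
-/

open Polynomial MeasureTheory

/-- The standard additive character `e(ξ) = exp(2πi·tr(x_{-1})/p)` evaluated on a
`t^{-1}`-coefficient `x ∈ F_q`. -/
noncomputable def eChar {Fq : Type} [Field Fq] [Fintype Fq] (p : ℕ)
    [Algebra (ZMod p) Fq] (x : Fq) : ℂ :=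
  Complex.exp (2 * Real.pi * Complex.I *
    ((Algebra.trace (ZMod p) Fq x).val : ℂ) / p)

open Finset

lemma AddChar.map_sum_eq_prod {A M ι : Type*} [AddCommMonoid A] [CommMonoid M] (ψ : AddChar A M)
    (s : Finset ι) (f : ι → A) : ψ (∑ i ∈ s, f i) = ∏ i ∈ s, ψ (f i) :=
  map_prod ψ.toMonoidHom (fun i => Multiplicative.ofAdd (f i)) s

section TraceAddChar

variable (F : Type) [Field F] [Fintype F] (p : ℕ) [Fact p.Prime] [Algebra (ZMod p) F]

noncomputable def traceAddChar : AddChar F ℂ :=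
  ZMod.stdAddChar.compAddMonoidHom (Algebra.trace (ZMod p) F).toAddMonoidHom

lemma coe_traceAddChar : ⇑(traceAddChar F p) = eChar p := by
  ext x
  simp [traceAddChar, eChar, ZMod.stdAddChar_apply, ZMod.toCircle_apply]

lemma isPrimitive_traceAddChar : (traceAddChar F p).IsPrimitive := by
  refine AddChar.IsPrimitive.of_ne_one fun h => ?_
  obtain ⟨x, hx⟩ := Algebra.trace_surjective (ZMod p) F 1
  have hψx := DFunLike.congr_fun h x
  rw [AddChar.one_apply, traceAddChar, AddChar.compAddMonoidHom_apply,
    LinearMap.toAddMonoidHom_coe, hx] at hψx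
  exact one_ne_zero (ZMod.injective_stdAddChar (hψx.trans (AddChar.map_zero_eq_one _).symm))

end TraceAddChar

section Cylinder

variable {ι G : Type*} [AddGroup G]

@[simps]
def Finset.restrictAddMonoidHom (s : Finset ι) : (ι → G) →+ (s → G) where
  toFun := s.restrict
  map_zero' := rfl
  map_add' _ _ := rfl

lemma Finset.restrictAddMonoidHom_surjective (s : Finset ι) :
    Function.Surjective (s.restrictAddMonoidHom (G := G)) := by
  classical
  intro c
  exact ⟨fun i => if h : i ∈ s then c ⟨i, h⟩ else 0,
    funext fun i => by simp⟩

lemma Finset.index_ker_restrictAddMonoidHom [Fintype G] (s : Finset ι) :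
    (s.restrictAddMonoidHom (G := G)).ker.index = Fintype.card G ^ #s := by
  rw [AddSubgroup.index_ker, AddMonoidHom.range_eq_top.2 s.restrictAddMonoidHom_surjective,
    AddSubgroup.card_top, Nat.card_fun, Nat.card_eq_fintype_card, Nat.card_eq_finsetCard]

lemma Finset.coe_ker_restrictAddMonoidHom (s : Finset ι) :
    ((s.restrictAddMonoidHom (G := G)).ker : Set (ι → G)) = {φ | ∀ i ∈ s, φ i = 0} := by
  ext φ
  simp [funext_iff]

variable [MeasurableSpace G] [MeasurableSingletonClass G]

lemma measurableSet_cylinder (s : Finset ι) : MeasurableSet {φ : ι → G | ∀ i ∈ s, φ i = 0} := by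
  simp only [Set.ofPred_forall]
  exact s.measurableSet_biInter fun i _ => measurable_pi_apply i (measurableSet_singleton 0)

lemma card_pow_mul_measure_cylinder [Fintype G] (s : Finset ι) (μ : Measure (ι → G))
    [μ.IsAddLeftInvariant] :
    Fintype.card G ^ #s * μ {φ | ∀ i ∈ s, φ i = 0} = μ Set.univ := by
  have hmeas := measurableSet_cylinder (G := G) s
  rw [← s.coe_ker_restrictAddMonoidHom] at hmeas ⊢
  have : (s.restrictAddMonoidHom (G := G)).ker.FiniteIndex :=
    ⟨by rw [s.index_ker_restrictAddMonoidHom]; exact pow_ne_zero _ Fintype.card_ne_zero⟩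
  rw [← AddSubgroup.index_mul_measure _ hmeas μ, s.index_ker_restrictAddMonoidHom, Nat.cast_pow]

end Cylinder

namespace Polynomial

section Semiring

variable {R : Type*} [Semiring R]

def coeffPairing (φ : ℕ → R) : R[X] →+ R where
  toFun f := f.sum fun i a => a * φ i
  map_zero' := sum_zero_index _
  map_add' f g := sum_add_index f g _ (fun _ => zero_mul _) fun _ _ _ => add_mul _ _ _

lemma coeffPairing_apply (φ : ℕ → R) (f : R[X]) :
    coeffPairing φ f = ∑ i ∈ f.support, f.coeff i * φ i := rfl

lemma coeffPairing_monomial (φ : ℕ → R) (i : ℕ) (a : R) :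
    coeffPairing φ (monomial i a) = a * φ i :=
  sum_monomial_index a (fun i a => a * φ i) (zero_mul _)

lemma coeff_sum_monomial_subtype (s : Finset ℕ) (c : s → R) (m : ℕ) :
    (∑ i : s, monomial i (c i)).coeff m = if h : m ∈ s then c ⟨m, h⟩ else 0 := by
  simp only [finsetSum_coeff, coeff_monomial]
  split_ifs with h
  · rw [Fintype.sum_eq_single ⟨m, h⟩ fun i hi => if_neg fun him => hi (Subtype.ext him)]
    exact if_pos rfl
  · exact Finset.sum_eq_zero fun i _ => if_neg fun (him : (i : ℕ) = m) => h (him ▸ i.2)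

section Prescribed

variable (n : ℕ) (I : Finset ℕ) (α : ℕ → R)

def freeIndices : Finset ℕ := range n \ I

noncomputable def basePoly : R[X] := X ^ n + ∑ i ∈ I, monomial i (α i)

noncomputable def fillPoly (c : freeIndices n I → R) : R[X] :=
  basePoly n I α + ∑ i : freeIndices n I, monomial (i : ℕ) (c i)

variable {n I α}

lemma mem_freeIndices {m : ℕ} : m ∈ freeIndices n I ↔ m < n ∧ m ∉ I := by
  simp [freeIndices]

lemma coeff_fillPoly (c : freeIndices n I → R) (m : ℕ) :
    (fillPoly n I α c).coeff m = (if m = n then 1 else 0) + (if m ∈ I then α m else 0) +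
      if h : m ∈ freeIndices n I then c ⟨m, h⟩ else 0 := by
  rw [fillPoly, basePoly, coeff_add, coeff_add, coeff_sum_monomial_subtype, coeff_X_pow,
    finsetSum_coeff]
  simp only [coeff_monomial, sum_ite_eq']

lemma coeffPairing_fillPoly (φ : ℕ → R) (c : freeIndices n I → R) :
    coeffPairing φ (fillPoly n I α c) = coeffPairing φ (basePoly n I α) + ∑ i, c i * φ i := by
  simp [fillPoly, coeffPairing_monomial]

lemma coeff_fillPoly_of_mem_freeIndices (c : freeIndices n I → R) {m : ℕ}
    (hm : m ∈ freeIndices n I) : (fillPoly n I α c).coeff m = c ⟨m, hm⟩ := by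
  obtain ⟨hmn, hmI⟩ := mem_freeIndices.1 hm
  simp [coeff_fillPoly, hm, hmI, hmn.ne]

variable (hI : I ⊆ range n)
include hI

lemma coeff_fillPoly_of_mem (c : freeIndices n I → R) {m : ℕ} (hm : m ∈ I) :
    (fillPoly n I α c).coeff m = α m := by
  have hmn := mem_range.1 (hI hm)
  simp [coeff_fillPoly, hm, hmn.ne, mem_freeIndices]

lemma coeff_fillPoly_self (c : freeIndices n I → R) : (fillPoly n I α c).coeff n = 1 := by
  have hn : n ∉ I := fun h => (mem_range.1 (hI h)).false
  simp [coeff_fillPoly, hn, mem_freeIndices]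

lemma coeff_fillPoly_of_lt (c : freeIndices n I → R) {m : ℕ} (hm : n < m) :
    (fillPoly n I α c).coeff m = 0 := by
  have hmI : m ∉ I := fun h => (mem_range.1 (hI h)).not_gt hm
  simp [coeff_fillPoly, hmI, hm.ne', mem_freeIndices, hm.le.not_gt]

lemma natDegree_fillPoly [Nontrivial R] (c : freeIndices n I → R) :
    (fillPoly n I α c).natDegree = n :=
  natDegree_eq_of_le_of_coeff_ne_zero
    (natDegree_le_iff_coeff_eq_zero.2 fun _ hm => coeff_fillPoly_of_lt hI c (by exact_mod_cast hm))
    (by rw [coeff_fillPoly_self hI]; exact one_ne_zero)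

lemma monic_fillPoly [Nontrivial R] (c : freeIndices n I → R) : (fillPoly n I α c).Monic := by
  rw [Monic, leadingCoeff, natDegree_fillPoly hI, coeff_fillPoly_self hI]

lemma fillPoly_coeff_eq_self {f : R[X]} (hf : f.Monic) (hdeg : f.natDegree = n)
    (hα : ∀ i ∈ I, f.coeff i = α i) : fillPoly n I α (fun i => f.coeff i) = f := by
  ext m
  rcases lt_trichotomy m n with hmn | rfl | hnm
  · by_cases hm : m ∈ I
    · rw [coeff_fillPoly_of_mem hI _ hm, hα m hm]
    · exact coeff_fillPoly_of_mem_freeIndices _ (mem_freeIndices.2 ⟨hmn, hm⟩)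
  · rw [coeff_fillPoly_self hI, ← hdeg, hf.coeff_natDegree]
  · rw [coeff_fillPoly_of_lt hI _ hnm, coeff_eq_zero_of_natDegree_lt (hdeg ▸ hnm)]

variable {J : Finset R[X]}
  (hJ : ∀ f, f ∈ J ↔ f.Monic ∧ f.natDegree = n ∧ ∀ i ∈ I, f.coeff i = α i)
include hJ

lemma sum_eq_sum_fillPoly [Nontrivial R] [Fintype R] {M : Type*} [AddCommMonoid M]
    (g : R[X] → M) : ∑ f ∈ J, g f = ∑ c, g (fillPoly n I α c) := by
  have hfill : ∀ f ∈ J, fillPoly n I α (fun i => f.coeff i) = f := fun f hf => by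
    obtain ⟨hmon, hdeg, hα⟩ := (hJ f).1 hf
    exact fillPoly_coeff_eq_self hI hmon hdeg hα
  refine sum_nbij' (fun f i => f.coeff i) (fillPoly n I α) (fun _ _ => mem_univ _)
    (fun c _ => (hJ _).2 ⟨monic_fillPoly hI c, natDegree_fillPoly hI c,
      fun _ hm => coeff_fillPoly_of_mem hI c hm⟩)
    hfill (fun c _ => _root_.funext fun i => coeff_fillPoly_of_mem_freeIndices c i.2)
    fun f hf => by rw [hfill f hf]

lemma sum_addChar_coeffPairing [Nontrivial R] [Fintype R] {M : Type*} [CommSemiring M]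
    (ψ : AddChar R M) (φ : ℕ → R) :
    ∑ f ∈ J, ψ (coeffPairing φ f) =
      ψ (coeffPairing φ (basePoly n I α)) * ∏ i : freeIndices n I, ∑ x, ψ (x * φ i) := by
  rw [sum_eq_sum_fillPoly hI hJ, Fintype.prod_sum, mul_sum]
  refine sum_congr rfl fun c _ => ?_
  rw [coeffPairing_fillPoly, ψ.map_add_eq_mul, ψ.map_sum_eq_prod]

end Prescribed

end Semiring

section Primitive

variable {R : Type*} [CommRing R] [Fintype R] [DecidableEq R] [Nontrivial R] {n : ℕ}
  {I : Finset ℕ} {α : ℕ → R} {J : Finset R[X]}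

lemma norm_sum_addChar_coeffPairing (hI : I ⊆ range n)
    (hJ : ∀ f, f ∈ J ↔ f.Monic ∧ f.natDegree = n ∧ ∀ i ∈ I, f.coeff i = α i)
    {ψ : AddChar R ℂ} (hψ : ψ.IsPrimitive) (φ : ℕ → R) :
    ‖∑ f ∈ J, ψ (coeffPairing φ f)‖ = {φ : ℕ → R | ∀ i ∈ freeIndices n I, φ i = 0}.indicator
      (fun _ => (Fintype.card R : ℝ) ^ #(freeIndices n I)) φ := by
  rw [sum_addChar_coeffPairing hI hJ, norm_mul, AddChar.norm_apply, one_mul, norm_prod,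
    Set.indicator_apply]
  simp_rw [Set.mem_ofPred_eq, AddChar.sum_mulShift _ hψ]
  split_ifs with h
  · simp [h]
  · obtain ⟨i, hi, hφi⟩ := not_forall₂.1 h
    exact prod_eq_zero (mem_univ ⟨i, hi⟩) (by simp [hφi])

end Primitive

end Polynomial

/-- `T` is identified with coefficient sequences `φ : ℕ → Fq`, `φ i = ξ_{-(i+1)}`, so that the
`t^{-1}`-coefficient of `fξ` is `∑ᵢ fᵢ·φ i`. -/
theorem integral_abs_SJ_general
    (Fq : Type) [Field Fq] [Fintype Fq] (p : ℕ) [Fact p.Prime]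
    [Algebra (ZMod p) Fq]
    [TopologicalSpace Fq]
    [MeasurableSpace Fq] [MeasurableSingletonClass Fq]
    (n : ℕ) (I : Finset ℕ) (hI : I ⊆ Finset.range n) (α : ℕ → Fq)
    (J : Finset (Polynomial Fq))
    (hJ : ∀ f, f ∈ J ↔ f.Monic ∧ f.natDegree = n ∧ ∀ i ∈ I, f.coeff i = α i)
    (μ : Measure (ℕ → Fq)) [μ.IsAddHaarMeasure] (hμ : μ Set.univ = 1) :
    ∫ φ : ℕ → Fq,
        ‖∑ f ∈ J, eChar p (∑ i ∈ f.support, f.coeff i * φ i)‖ ∂μ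
      = 1 := by
  classical
  set F := freeIndices n I
  have hS (φ : ℕ → Fq) : ‖∑ f ∈ J, eChar p (∑ i ∈ f.support, f.coeff i * φ i)‖ =
      {φ : ℕ → Fq | ∀ i ∈ F, φ i = 0}.indicator (fun _ => (Fintype.card Fq : ℝ) ^ #F) φ := by
    simpa only [← coe_traceAddChar, coeffPairing_apply] using
      norm_sum_addChar_coeffPairing hI hJ (isPrimitive_traceAddChar Fq p) φ
  have hV : (Fintype.card Fq : ℝ) ^ #F * μ.real {φ | ∀ i ∈ F, φ i = 0} = 1 := by
    simpa [hμ, measureReal_def] using congrArg ENNReal.toReal (card_pow_mul_measure_cylinder F μ)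
  simp_rw [hS]
  rw [integral_indicator_const _ (measurableSet_cylinder F), smul_eq_mul, mul_comm, hV]

/-- `∫_T |S_J(ξ)| dξ = 1`: for the set `J` of monic polynomials of degree `n`
with prescribed coefficients `α i` for `i ∈ I`, and `T = {ξ : |ξ| < 1}`
identified with coefficient sequences `φ : ℕ → Fq` (`φ i = ξ_{-(i+1)}`) and
equipped with the normalized Haar measure, the integral of
`|S_J(ξ)| = |∑_{f ∈ J} e(fξ)|` equals `1`; the `t^{-1}`-coefficient of `fξ` is
`∑ᵢ fᵢ·φ i`. -/
theorem integral_abs_SJ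
    (Fq : Type) [Field Fq] [Fintype Fq] (p : ℕ) [Fact p.Prime] [CharP Fq p]
    [Algebra (ZMod p) Fq]
    [TopologicalSpace Fq] [DiscreteTopology Fq] [IsTopologicalAddGroup Fq]
    [MeasurableSpace Fq] [MeasurableSingletonClass Fq]
    (n : ℕ) (I : Finset ℕ) (hI : I ⊆ Finset.range n) (α : ℕ → Fq)
    (J : Finset (Polynomial Fq))
    (hJ : ∀ f, f ∈ J ↔ f.Monic ∧ f.natDegree = n ∧ ∀ i ∈ I, f.coeff i = α i)
    (μ : Measure (ℕ → Fq)) [μ.IsAddHaarMeasure] (hμ : μ Set.univ = 1) :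
    ∫ φ : ℕ → Fq,
        ‖∑ f ∈ J, eChar p (∑ i ∈ f.support, f.coeff i * φ i)‖ ∂μ
      = 1 :=
  integral_abs_SJ_general Fq p n I hI α J hJ μ hμ
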